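/- Monotonicity and invariance of α-sets: Let x ∈ X, σ ∈ S^G_{<∞} with domain d and range c, and let α, β ≥ 1 be countable ordinals. Then: (a) if β ≤ α then B_α(x,σ) ⊆ B_β(x,σ); (b) V^G_σ·x ⊆ B_α(x,σ) and B_α(x,σ) is V^G_c-invariant (i.e. g·B_α(x,σ) = B_α(x,σ) for every g ∈ V^G_c); (c) if δ ∈ S^G_{<∞} and δ ⊇ σ then B_α(x,δ) ⊆ B_α(x,σ). -/

import Mathlib

open Set Pointwise

noncomputable section

/-- `S_∞`, the group of all permutations of `ℕ`. -/
abbrev Sinf : Type := Equiv.Perm ℕ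

/-- The topology of pointwise convergence on `S_∞`. -/
instance SinfTopology : TopologicalSpace Sinf :=
  TopologicalSpace.induced (fun g : Sinf => (g : ℕ → ℕ)) Pi.topologicalSpace

/-- The graph of the restriction of a permutation `g` to a finite set `d`. -/
def restr (g : Sinf) (d : Finset ℕ) : Set (ℕ × ℕ) := {p | p.1 ∈ d ∧ g p.1 = p.2}

/-- The domain of a partial map coded by its graph. -/
def pdom (σ : Set (ℕ × ℕ)) : Set ℕ := Prod.fst '' σ

/-- The range of a partial map coded by its graph. -/
def prng (σ : Set (ℕ × ℕ)) : Set ℕ := Prod.snd '' σ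

/-- `S^G_{<∞}`: graphs of restrictions of elements of `G` to finite subsets of `ℕ`. -/
def SGfin (G : Subgroup Sinf) : Set (Set (ℕ × ℕ)) :=
  {σ | ∃ g ∈ G, ∃ d : Finset ℕ, σ = restr g d}

/-- `V^G_σ`: the elements of `G` extending the partial bijection `σ`. -/
def Vb (G : Subgroup Sinf) (σ : Set (ℕ × ℕ)) : Set G :=
  {g : G | ∀ p ∈ σ, (g : Sinf) p.1 = p.2}

/-- `V^G_c`: the pointwise stabilizer of `c ⊆ ℕ` in `G`. -/
def Vc (G : Subgroup Sinf) (c : Set ℕ) : Set G :=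
  {g : G | ∀ k ∈ c, (g : Sinf) k = k}

/-- The identity partial bijection on `c`. -/
def idb (c : Set ℕ) : Set (ℕ × ℕ) := {p | p.1 ∈ c ∧ p.2 = p.1}

/-- The composition `σ ∘ f`, restricted to `f⁻¹[dom σ]`. -/
def compR (σ : Set (ℕ × ℕ)) (f : Sinf) : Set (ℕ × ℕ) := {p | (f p.1, p.2) ∈ σ}

/-- The composition `f ∘ σ`. -/
def compL (f : Sinf) (σ : Set (ℕ × ℕ)) : Set (ℕ × ℕ) := {p | (p.1, f⁻¹ p.2) ∈ σ}

/-- The Borel classes `Σ⁰_α(X)`: `Σ⁰_1(X)` consists of the open sets, and for `α > 1`,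
`Σ⁰_α(X)` consists of countable unions of sets whose complements lie in
`⋃_{1 ≤ β < α} Σ⁰_β(X)` (i.e. of sets from `⋃_{1 ≤ β < α} Π⁰_β(X)`). -/
def SigmaB (X : Type*) [TopologicalSpace X] (α : Ordinal.{0}) : Set (Set X) :=
  if α ≤ 1 then {s | IsOpen s}
  else {s | ∃ f : ℕ → Set X,
      (∀ n, ∃ β : {γ : Ordinal.{0} // γ < α}, 1 ≤ β.1 ∧ (f n)ᶜ ∈ SigmaB X β.1) ∧
      s = ⋃ n, f n}
termination_by α
decreasing_by exact β.2

/-- The Borel classes `Π⁰_α(X)`: complements of sets in `Σ⁰_α(X)`. -/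
def PiB (X : Type*) [TopologicalSpace X] (α : Ordinal.{0}) : Set (Set X) :=
  {s | sᶜ ∈ SigmaB X α}

section Action

variable (G : Subgroup Sinf) {X : Type*} [TopologicalSpace X] [MulAction G X]

/-- The image `S • x` of a point under a set of group elements. -/
def setOrb (S : Set G) (x : X) : Set X := (fun g : G => g • x) '' S

/-- The image `S • B` of a set under a set of group elements. -/
def setSmul (S : Set G) (B : Set X) : Set X := ⋃ g ∈ S, g • B

/-- The `1`-sets `B₁(x, σ)`. -/
def BsetOne (A : ℕ → Set X) (σ : Set (ℕ × ℕ)) (x : X) : Set X :=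
  (⋂ l, ⋂ (_ : (setOrb G (Vb G σ) x ∩ A l).Nonempty), setSmul G (Vc G (prng σ)) (A l)) ∩
    (⋂ l, ⋂ (_ : setOrb G (Vb G σ) x ∩ A l = ∅), (setSmul G (Vc G (prng σ)) (A l))ᶜ)

/-- The successor step of the recursion defining the `α`-sets. -/
def BsetSucc (prev : Set (ℕ × ℕ) → X → Set X) (σ : Set (ℕ × ℕ)) (x : X) : Set X :=
  (⋂ b : Finset ℕ, ⋂ (_ : pdom σ ⊆ ↑b),
      ⋃ σ' ∈ SGfin G, ⋃ (_ : σ ⊆ σ') (_ : pdom σ' = ↑b), prev σ' x) ∩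
    (⋂ a : Finset ℕ, ⋂ (_ : prng σ ⊆ ↑a),
      ⋃ σ' ∈ SGfin G, ⋃ (_ : σ ⊆ σ') (_ : prng σ' = ↑a), prev σ' x)

/-- The `α`-sets `B_α(x, σ)`, for `α ≥ 1` (the value at `α = 0` is junk). -/
def Bset (A : ℕ → Set X) (α : Ordinal.{0}) : Set (ℕ × ℕ) → X → Set X :=
  @Ordinal.limitRecOn (fun _ => Set (ℕ × ℕ) → X → Set X) α
    (fun _ _ => univ)
    (fun o ih => if o = 0 then BsetOne G A else BsetSucc G ih)
    (fun o _ ih σ x => ⋂ β : Ordinal.{0}, ⋂ (hβ : β < o), ⋂ (_ : 1 ≤ β), ih β hβ σ x)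

/-- The family `𝓑^x_{<α}` consisting of the basic open sets together with all
`β`-sets of `x` for `1 ≤ β < α`. -/
def BltFam (A : ℕ → Set X) (x : X) (α : Ordinal.{0}) : Set (Set X) :=
  {B | (∃ l, B = A l) ∨
    ∃ β : Ordinal.{0}, 1 ≤ β ∧ β < α ∧ ∃ σ ∈ SGfin G, B = Bset G A β σ x}

/-- `γ^G_*(x)`: the least countable ordinal `γ` such that for all `σ, δ ∈ S^G_{<∞}`
with equal ranges, if `B_α(x,σ) ≠ B_α(x,δ)` for some countable ordinal `α ≥ 1`,
then already `B_γ(x,σ) ≠ B_γ(x,δ)`. -/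
def gammaStar (A : ℕ → Set X) (x : X) : Ordinal :=
  sInf {γ : Ordinal.{0} | γ.card ≤ Cardinal.aleph0 ∧
    ∀ σ ∈ SGfin G, ∀ δ ∈ SGfin G, prng σ = prng δ →
      (∃ α : Ordinal.{0}, 1 ≤ α ∧ α.card ≤ Cardinal.aleph0 ∧
        Bset G A α σ x ≠ Bset G A α δ x) →
      Bset G A γ σ x ≠ Bset G A γ δ x}

end Action

/-- The topology on a subset `S ⊆ X` generated by the traces on `S` of the members
of the family `F`. -/
def traceTop {X : Type*} (S : Set X) (F : Set (Set X)) : TopologicalSpace S :=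
  TopologicalSpace.generateFrom {u : Set S | ∃ B ∈ F, u = Subtype.val ⁻¹' B}

/-- The space of closed subsets of `Y`. -/
def EffrosSpace (Y : Type*) [TopologicalSpace Y] := {K : Set Y // IsClosed K}

/-- The Effros Borel structure on the space of closed subsets of `Y`. -/
def effrosSigma (Y : Type*) [TopologicalSpace Y] : MeasurableSpace (EffrosSpace Y) :=
  MeasurableSpace.generateFrom
    {S | ∃ U : Set Y, IsOpen U ∧ S = {K : EffrosSpace Y | (K.1 ∩ U).Nonempty}}

/-!
Write `V_c` for the pointwise stabiliser of `c = rng σ`. For any `g ∈ V_σ` we have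
`V_σ = V_c g`, and as `A` is a basis, `B₁(x, σ)` is the set of `y` with
`cl (V_c • y) = cl (V_σ • x)`. In this form the properties of `1`-sets become identities between
orbits: translating `σ` by `u ∈ G` translates `V_σ` and conjugates `V_c`, and `σ ⊆ δ` gives
`V_{rng σ} • V_δ • x = V_σ • x`.

The containment `V_σ • x ⊆ B_α(x, σ)`, the inclusion `B_α(x, u ∘ σ) ⊆ u • B_α(x, σ)` and the
antitonicity of `B_α(x, ·)` on `S^G_{<∞}` then pass through intersections and through the
successor step, which only uses that a partial map from `S^G_{<∞}` can be cut down or extended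
inside `S^G_{<∞}` to any prescribed finite domain or range. Monotonicity in `α` follows from
antitonicity in `σ`: for `b = dom σ` the successor clause produces `τ ⊇ σ` with
`y ∈ B_α(x, τ) ⊆ B_α(x, σ)`. Invariance is the translation identity, as `u ∘ σ = σ` for `u ∈ V_c`.
-/

open Function (graph)

section PartialMaps

variable {G : Subgroup Sinf}

lemma mem_SGfin_iff {σ : Set (ℕ × ℕ)} :
    σ ∈ SGfin G ↔ σ.Finite ∧ ∃ g ∈ G, σ ⊆ graph (g : ℕ → ℕ) := by
  constructor
  · rintro ⟨g, hg, d, rfl⟩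
    refine ⟨(d.finite_toSet.image fun j => (j, g j)).subset ?_, g, hg, fun p hp => hp.2⟩
    exact fun p hp => ⟨p.1, hp.1, Prod.ext rfl hp.2⟩
  · rintro ⟨hfin, g, hg, hσg⟩
    refine ⟨g, hg, (hfin.image Prod.fst).toFinset, Set.ext fun p => ?_⟩
    simp only [restr, Set.Finite.mem_toFinset]
    refine ⟨fun hp => ⟨⟨p, hp, rfl⟩, hσg hp⟩, ?_⟩
    rintro ⟨⟨q, hq, hqp⟩, hgp⟩
    have : q = p := Prod.ext hqp (by rw [← hσg hq, ← hgp, hqp])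
    exact this ▸ hq

lemma injOn_graph {f : ℕ × ℕ → ℕ} (hf : f = Prod.fst ∨ f = Prod.snd) (g : Sinf) :
    InjOn f (graph g) := by
  rintro p (hp : g p.1 = p.2) q (hq : g q.1 = q.2) hpq
  rcases hf with rfl | rfl
  · exact Prod.ext hpq (by rw [← hp, ← hq, hpq])
  · exact Prod.ext (g.injective (by rw [hp, hq, hpq])) hpq

lemma image_graph {f : ℕ × ℕ → ℕ} (hf : f = Prod.fst ∨ f = Prod.snd) (g : Sinf) :
    f '' graph g = univ := by
  rcases hf with rfl | rfl
  · exact eq_univ_of_forall fun j => ⟨(j, g j), rfl, rfl⟩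
  · exact eq_univ_of_forall fun k => ⟨(g⁻¹ k, k), Equiv.apply_symm_apply g k, rfl⟩

/-- Cutting `τ` down to the pairs whose `f`-coordinate lies in `b`. -/
lemma exists_SGfin_between {f : ℕ × ℕ → ℕ} (hf : f = Prod.fst ∨ f = Prod.snd) {g : Sinf}
    (hg : g ∈ G) {σ τ : Set (ℕ × ℕ)} {b : Finset ℕ} (hτ : τ ⊆ graph g) (hστ : σ ⊆ τ)
    (hσb : f '' σ ⊆ b) (hbτ : ↑b ⊆ f '' τ) :
    ∃ σ' ∈ SGfin G, σ ⊆ σ' ∧ σ' ⊆ τ ∧ f '' σ' = b := by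
  refine ⟨{p ∈ τ | f p ∈ b}, mem_SGfin_iff.2 ⟨?_, g, hg, fun p hp => hτ hp.1⟩,
    fun p hp => ⟨hστ hp, hσb ⟨p, hp, rfl⟩⟩, fun p hp => hp.1, ?_⟩
  · exact Set.Finite.of_finite_image (b.finite_toSet.subset (image_subset_iff.2 fun p hp => hp.2))
      ((injOn_graph hf g).mono fun p hp => hτ hp.1)
  · refine Subset.antisymm (image_subset_iff.2 fun p hp => hp.2) fun j hj => ?_
    obtain ⟨p, hp, rfl⟩ := hbτ hj
    exact ⟨p, ⟨hp, hj⟩, rfl⟩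

lemma compL_one (σ : Set (ℕ × ℕ)) : compL 1 σ = σ := rfl

lemma compL_compL (f f' : Sinf) (σ : Set (ℕ × ℕ)) :
    compL f (compL f' σ) = compL (f * f') σ := by
  ext p; simp [compL, mul_inv_rev, Equiv.Perm.mul_apply]

lemma compL_inv_compL (f : Sinf) (σ : Set (ℕ × ℕ)) : compL f⁻¹ (compL f σ) = σ := by
  rw [compL_compL, inv_mul_cancel, compL_one]

lemma compL_compL_inv (f : Sinf) (σ : Set (ℕ × ℕ)) : compL f (compL f⁻¹ σ) = σ := by
  rw [compL_compL, mul_inv_cancel, compL_one]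

lemma compL_mono (f : Sinf) {σ τ : Set (ℕ × ℕ)} (h : σ ⊆ τ) : compL f σ ⊆ compL f τ :=
  fun _ hp => h hp

lemma compL_subset_compL_iff (f : Sinf) {σ τ : Set (ℕ × ℕ)} : compL f σ ⊆ compL f τ ↔ σ ⊆ τ :=
  ⟨fun h => by simpa only [compL_inv_compL] using compL_mono f⁻¹ h, compL_mono f⟩

lemma pdom_compL (f : Sinf) (σ : Set (ℕ × ℕ)) : pdom (compL f σ) = pdom σ := by
  ext j
  constructor
  · rintro ⟨p, hp, rfl⟩; exact ⟨_, hp, rfl⟩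
  · rintro ⟨p, hp, rfl⟩; exact ⟨(p.1, f p.2), by simpa [compL] using hp, rfl⟩

lemma prng_compL (f : Sinf) (σ : Set (ℕ × ℕ)) : prng (compL f σ) = f '' prng σ := by
  ext k
  constructor
  · rintro ⟨p, hp, rfl⟩; exact ⟨f⁻¹ p.2, ⟨_, hp, rfl⟩, Equiv.apply_symm_apply f p.2⟩
  · rintro ⟨_, ⟨p, hp, rfl⟩, rfl⟩; exact ⟨(p.1, f p.2), by simpa [compL] using hp, rfl⟩

/-- `h` is `1` for domains and `u` for ranges. -/
lemma exists_image_compL {f : ℕ × ℕ → ℕ} (hf : f = Prod.fst ∨ f = Prod.snd) (u : Sinf) :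
    ∃ h : Sinf, ∀ τ, f '' compL u τ = h '' (f '' τ) := by
  rcases hf with rfl | rfl
  · exact ⟨1, fun τ => by rw [Equiv.Perm.coe_one, image_id]; exact pdom_compL u τ⟩
  · exact ⟨u, prng_compL u⟩

lemma SGfin_compL {σ : Set (ℕ × ℕ)} (hσ : σ ∈ SGfin G) (u : G) : compL u σ ∈ SGfin G := by
  obtain ⟨g, hg, d, rfl⟩ := hσ
  refine ⟨u * g, mul_mem u.2 hg, d, Set.ext fun p => ?_⟩
  simp [compL, restr, Equiv.eq_symm_apply, eq_comm]

end PartialMaps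

section Stabilizers

variable {G : Subgroup Sinf}

lemma Vc_eq_fixingSubgroup (c : Set ℕ) : Vc G c = fixingSubgroup G c := by
  ext g; exact (mem_fixingSubgroup_iff G).symm

lemma mul_mem_Vb {σ : Set (ℕ × ℕ)} {v g : G} (hv : v ∈ Vc G (prng σ)) (hg : g ∈ Vb G σ) :
    v * g ∈ Vb G σ := by
  intro p hp
  change (v : Sinf) ((g : Sinf) p.1) = p.2
  rw [hg p hp, hv p.2 ⟨p, hp, rfl⟩]

lemma mul_inv_mem_Vc {σ : Set (ℕ × ℕ)} {g h : G} (hg : g ∈ Vb G σ) (hh : h ∈ Vb G σ) :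
    g * h⁻¹ ∈ Vc G (prng σ) := by
  rintro _ ⟨p, hp, rfl⟩
  change (g : Sinf) ((h : Sinf)⁻¹ p.2) = p.2
  rw [Equiv.Perm.inv_eq_iff_eq.2 (hh p hp).symm, hg p hp]

lemma mem_Vb_compL (u : G) {σ : Set (ℕ × ℕ)} {g : G} :
    g ∈ Vb G (compL u σ) ↔ u⁻¹ * g ∈ Vb G σ := by
  refine ⟨fun h p hp => ?_, fun h p hp => ?_⟩
  · have := h (p.1, (u : Sinf) p.2) (by simpa [compL] using hp)
    change (u : Sinf)⁻¹ ((g : Sinf) p.1) = p.2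
    rw [this, Equiv.Perm.coe_inv, Equiv.symm_apply_apply]
  · exact (u : Sinf)⁻¹.injective (h _ hp)

lemma mem_Vc_image (u : G) (c : Set ℕ) {g : G} :
    g ∈ Vc G ((u : Sinf) '' c) ↔ u⁻¹ * g * u ∈ Vc G c := by
  refine ⟨fun h k hk => ?_, fun h => ?_⟩
  · change (u : Sinf)⁻¹ ((g : Sinf) ((u : Sinf) k)) = k
    rw [h _ ⟨k, hk, rfl⟩, Equiv.Perm.coe_inv, Equiv.symm_apply_apply]
  · rintro _ ⟨k, hk, rfl⟩
    have := h k hk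
    change (u : Sinf)⁻¹ ((g : Sinf) ((u : Sinf) k)) = k at this
    rwa [Equiv.Perm.inv_eq_iff_eq] at this

lemma compL_eq_self {σ : Set (ℕ × ℕ)} {u : G} (hu : u ∈ Vc G (prng σ)) : compL u σ = σ := by
  refine Set.ext fun p => ⟨fun hp => ?_, fun hp => ?_⟩
  · have hk : p.2 = (u : Sinf)⁻¹ p.2 :=
      (Equiv.apply_symm_apply (u : Sinf) p.2).symm.trans (hu _ ⟨_, hp, rfl⟩)
    simpa only [compL, mem_ofPred_eq, ← hk] using hp
  · have hk : (u : Sinf)⁻¹ p.2 = p.2 := Equiv.Perm.inv_eq_iff_eq.2 (hu _ ⟨_, hp, rfl⟩).symm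
    simpa only [compL, mem_ofPred_eq, hk] using hp

end Stabilizers

theorem TopologicalSpace.IsTopologicalBasis.closure_eq_closure_iff {X ι : Type*}
    [TopologicalSpace X] {A : ι → Set X} (hA : IsTopologicalBasis (range A)) {s t : Set X} :
    closure s = closure t ↔ ∀ i, (s ∩ A i).Nonempty ↔ (t ∩ A i).Nonempty := by
  have closure_subset_iff : ∀ {s t : Set X},
      closure s ⊆ closure t ↔ ∀ i, (s ∩ A i).Nonempty → (t ∩ A i).Nonempty := by
    refine fun {s t} => ⟨fun h i ⟨z, hzs, hzA⟩ => ?_, fun h => ?_⟩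
    · rw [inter_comm]
      exact hA.mem_closure_iff.1 (h (subset_closure hzs)) _ ⟨i, rfl⟩ hzA
    · refine closure_minimal (fun z hz => hA.mem_closure_iff.2 ?_) isClosed_closure
      rintro _ ⟨i, rfl⟩ hzi
      rw [inter_comm]
      exact h i ⟨z, hz, hzi⟩
  rw [Subset.antisymm_iff, closure_subset_iff, closure_subset_iff]
  exact ⟨fun h i => ⟨h.1 i, h.2 i⟩, fun h => ⟨fun i => (h i).1, fun i => (h i).2⟩⟩

section Orbits

variable {G : Subgroup Sinf} {X : Type*} [MulAction G X]

lemma setSmul_eq_smul (S : Set G) (B : Set X) : setSmul G S B = S • B := iUnion_smul_set S B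

lemma mem_setSmul_Vc_iff {c : Set ℕ} {B : Set X} {y : X} :
    y ∈ setSmul G (Vc G c) B ↔ (setOrb G (Vc G c) y ∩ B).Nonempty := by
  simp only [setSmul, setOrb, mem_iUnion₂, mem_smul_set_iff_inv_smul_mem, Vc_eq_fixingSubgroup,
    SetLike.mem_coe]
  constructor
  · rintro ⟨g, hg, hy⟩
    exact ⟨g⁻¹ • y, ⟨g⁻¹, inv_mem hg, rfl⟩, hy⟩
  · rintro ⟨_, ⟨g, hg, rfl⟩, hy⟩
    exact ⟨g⁻¹, inv_mem hg, by rwa [inv_inv]⟩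

lemma setOrb_Vc_prng {σ : Set (ℕ × ℕ)} {g : G} (hg : g ∈ Vb G σ) (x : X) :
    setOrb G (Vc G (prng σ)) (g • x) = setOrb G (Vb G σ) x := by
  ext y
  constructor
  · rintro ⟨v, hv, rfl⟩
    exact ⟨v * g, mul_mem_Vb hv hg, mul_smul v g x⟩
  · rintro ⟨h, hh, rfl⟩
    exact ⟨h * g⁻¹, mul_inv_mem_Vc hh hg, by simp only [smul_smul, inv_mul_cancel_right]⟩

lemma setOrb_Vb_compL (u : G) (σ : Set (ℕ × ℕ)) (x : X) :
    setOrb G (Vb G (compL u σ)) x = u • setOrb G (Vb G σ) x := by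
  ext y
  rw [mem_smul_set_iff_inv_smul_mem]
  constructor
  · rintro ⟨h, hh, rfl⟩
    exact ⟨u⁻¹ * h, (mem_Vb_compL u).1 hh, mul_smul _ _ _⟩
  · rintro ⟨h, hh, hy⟩
    refine ⟨u * h, (mem_Vb_compL u).2 (by rwa [inv_mul_cancel_left]), ?_⟩
    simp only [mul_smul] at hy ⊢
    rw [hy, smul_inv_smul]

lemma setOrb_Vc_image (u : G) (c : Set ℕ) (y : X) :
    setOrb G (Vc G ((u : Sinf) '' c)) y = u • setOrb G (Vc G c) (u⁻¹ • y) := by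
  ext z
  rw [mem_smul_set_iff_inv_smul_mem]
  constructor
  · rintro ⟨v, hv, rfl⟩
    refine ⟨u⁻¹ * v * u, (mem_Vc_image u c).1 hv, ?_⟩
    simp only [smul_smul, mul_inv_cancel_right]
  · rintro ⟨w, hw, hz⟩
    refine ⟨u * w * u⁻¹, (mem_Vc_image u c).2 (by group; exact hw), ?_⟩
    rw [← smul_inv_smul u z, ← hz]
    simp only [smul_smul, mul_assoc]

lemma setOrb_Vc_eq_setSmul {c c' : Set ℕ} (h : c ⊆ c') (y : X) :
    setOrb G (Vc G c) y = setSmul G (Vc G c) (setOrb G (Vc G c') y) := by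
  ext z
  rw [mem_setSmul_Vc_iff]
  simp only [setOrb, Vc_eq_fixingSubgroup]
  constructor
  · rintro ⟨v, hv, rfl⟩
    exact ⟨y, ⟨v⁻¹, inv_mem hv, inv_smul_smul v y⟩, ⟨1, one_mem _, one_smul G y⟩⟩
  · rintro ⟨_, ⟨v, hv, rfl⟩, ⟨w, hw, hvw⟩⟩
    refine ⟨v⁻¹ * w, mul_mem (inv_mem hv) (fixingSubgroup_antitone G ℕ h hw), ?_⟩
    simp only [mul_smul, hvw, inv_smul_smul]

end Orbits

section OneSets

variable {G : Subgroup Sinf} {X : Type*} [TopologicalSpace X] [MulAction G X] {A : ℕ → Set X}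

lemma mem_BsetOne_iff (hA : TopologicalSpace.IsTopologicalBasis (range A))
    {σ : Set (ℕ × ℕ)} {x y : X} :
    y ∈ BsetOne G A σ x ↔
      closure (setOrb G (Vc G (prng σ)) y) = closure (setOrb G (Vb G σ) x) := by
  rw [hA.closure_eq_closure_iff]
  simp only [BsetOne, mem_inter_iff, mem_iInter, mem_compl_iff, mem_setSmul_Vc_iff,
    ← not_nonempty_iff_eq_empty]
  exact ⟨fun h l => ⟨fun hy => by_contra fun hx => h.2 l hx hy, h.1 l⟩,
    fun h => ⟨fun l => (h l).2, fun l hx hy => hx ((h l).1 hy)⟩⟩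

lemma setOrb_subset_BsetOne (hA : TopologicalSpace.IsTopologicalBasis (range A))
    (σ : Set (ℕ × ℕ)) (x : X) : setOrb G (Vb G σ) x ⊆ BsetOne G A σ x := by
  rintro _ ⟨g, hg, rfl⟩
  rw [mem_BsetOne_iff hA, setOrb_Vc_prng hg]

variable [ContinuousConstSMul G X]

lemma closure_setSmul_closure (S : Set G) (T : Set X) :
    closure (setSmul G S (closure T)) = closure (setSmul G S T) := by
  rw [setSmul_eq_smul, setSmul_eq_smul]
  exact Subset.antisymm (closure_minimal (set_smul_closure_subset S T) isClosed_closure)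
    (closure_mono (smul_subset_smul_left subset_closure))

lemma BsetOne_compL (hA : TopologicalSpace.IsTopologicalBasis (range A)) (u : G)
    (σ : Set (ℕ × ℕ)) (x : X) : BsetOne G A (compL u σ) x = u • BsetOne G A σ x := by
  ext y
  rw [mem_smul_set_iff_inv_smul_mem, mem_BsetOne_iff hA, mem_BsetOne_iff hA, prng_compL,
    setOrb_Vc_image, setOrb_Vb_compL, closure_smul, closure_smul, smul_left_cancel_iff]

lemma BsetOne_anti (hA : TopologicalSpace.IsTopologicalBasis (range A))
    {σ δ : Set (ℕ × ℕ)} (hδ : δ ∈ SGfin G) (hσδ : σ ⊆ δ) (x : X) :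
    BsetOne G A δ x ⊆ BsetOne G A σ x := by
  obtain ⟨-, g, hgG, hδg⟩ := mem_SGfin_iff.1 hδ
  have hgδ : (⟨g, hgG⟩ : G) ∈ Vb G δ := hδg
  have hgσ : (⟨g, hgG⟩ : G) ∈ Vb G σ := hσδ.trans hδg
  have hc : prng σ ⊆ prng δ := image_mono hσδ
  intro y hy
  rw [mem_BsetOne_iff hA] at hy ⊢
  calc closure (setOrb G (Vc G (prng σ)) y)
      = closure (setSmul G (Vc G (prng σ)) (closure (setOrb G (Vc G (prng δ)) y))) := by
        rw [closure_setSmul_closure, ← setOrb_Vc_eq_setSmul hc]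
    _ = closure (setOrb G (Vb G σ) x) := by
        rw [hy, closure_setSmul_closure, ← setOrb_Vc_prng hgδ, ← setOrb_Vc_eq_setSmul hc,
          setOrb_Vc_prng hgσ]

end OneSets

section SuccessorSets

variable {G : Subgroup Sinf} {X : Type*} {F : Set (ℕ × ℕ) → X → Set X} {x : X}

/-- `Prod.fst` gives the domain clause of `BsetSucc`, `Prod.snd` the range clause. -/
lemma mem_BsetSucc {σ : Set (ℕ × ℕ)} {y : X} :
    y ∈ BsetSucc G F σ x ↔ ∀ f : ℕ × ℕ → ℕ, f = Prod.fst ∨ f = Prod.snd →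
      ∀ b : Finset ℕ, f '' σ ⊆ b → ∃ τ ∈ SGfin G, σ ⊆ τ ∧ f '' τ = b ∧ y ∈ F τ x := by
  simp only [BsetSucc, pdom, prng, mem_inter_iff, mem_iInter, mem_iUnion, exists_prop, or_imp,
    forall_and, forall_eq]

lemma BsetSucc_anti (hF : ∀ σ δ, δ ∈ SGfin G → σ ⊆ δ → F δ x ⊆ F σ x) {σ δ : Set (ℕ × ℕ)}
    (hδ : δ ∈ SGfin G) (hσδ : σ ⊆ δ) : BsetSucc G F δ x ⊆ BsetSucc G F σ x := by
  intro y hy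
  refine mem_BsetSucc.2 fun f hf b hb => ?_
  obtain ⟨τ, hτ, hδτ, hτb, hyτ⟩ := mem_BsetSucc.1 hy f hf
    (b ∪ ((mem_SGfin_iff.1 hδ).1.image f).toFinset) (by simp)
  obtain ⟨-, g, hg, hτg⟩ := mem_SGfin_iff.1 hτ
  obtain ⟨σ', hσ', hσσ', hσ'τ, hσ'b⟩ :=
    exists_SGfin_between hf hg hτg (hσδ.trans hδτ) hb (by simp [hτb])
  exact ⟨σ', hσ', hσσ', hσ'b, hF σ' τ hτ hσ'τ hyτ⟩

lemma BsetSucc_subset (hF : ∀ σ δ, δ ∈ SGfin G → σ ⊆ δ → F δ x ⊆ F σ x)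
    {σ : Set (ℕ × ℕ)} (hσ : σ ∈ SGfin G) : BsetSucc G F σ x ⊆ F σ x := by
  intro y hy
  obtain ⟨τ, hτ, hστ, -, hyτ⟩ := mem_BsetSucc.1 hy Prod.fst (Or.inl rfl)
    ((mem_SGfin_iff.1 hσ).1.image Prod.fst).toFinset (by simp)
  exact hF σ τ hτ hστ hyτ

variable [MulAction G X]

lemma setOrb_subset_BsetSucc (hF : ∀ σ, setOrb G (Vb G σ) x ⊆ F σ x) (σ : Set (ℕ × ℕ)) :
    setOrb G (Vb G σ) x ⊆ BsetSucc G F σ x := by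
  rintro _ ⟨g, hg, rfl⟩
  refine mem_BsetSucc.2 fun f hf b hb => ?_
  obtain ⟨τ, hτ, hστ, hτg, hτb⟩ :=
    exists_SGfin_between hf g.2 subset_rfl hg hb (by simp [image_graph hf])
  exact ⟨τ, hτ, hστ, hτb, hF τ ⟨g, hτg, rfl⟩⟩

lemma BsetSucc_compL_subset (hF : ∀ (u : G) σ, F (compL u σ) x ⊆ u • F σ x) (u : G)
    (σ : Set (ℕ × ℕ)) : BsetSucc G F (compL u σ) x ⊆ u • BsetSucc G F σ x := by
  intro y hy
  refine mem_smul_set_iff_inv_smul_mem.2 (mem_BsetSucc.2 fun f hf b hb => ?_)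
  obtain ⟨h, hh⟩ := exists_image_compL hf u
  obtain ⟨τ, hτ, hστ, hτb, hyτ⟩ := mem_BsetSucc.1 hy f hf (b.image h)
    (by rw [hh, Finset.coe_image]; exact image_mono hb)
  refine ⟨compL (u⁻¹ : G) τ, SGfin_compL hτ u⁻¹, ?_, ?_, ?_⟩
  · rwa [← compL_subset_compL_iff u, Subgroup.coe_inv, compL_compL_inv]
  · refine image_injective.2 h.injective ?_
    rw [← hh, Subgroup.coe_inv, compL_compL_inv, hτb, Finset.coe_image]
  · refine mem_smul_set_iff_inv_smul_mem.1 (hF u _ ?_)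
    rwa [Subgroup.coe_inv, compL_compL_inv]

end SuccessorSets

section AlphaSets

variable {G : Subgroup Sinf} {X : Type*} [MulAction G X] {A : ℕ → Set X}

lemma Bset_one : Bset G A 1 = BsetOne G A := by
  rw [← zero_add 1, Bset, Ordinal.limitRecOn_add_one, if_pos rfl]

lemma Bset_add_one {o : Ordinal.{0}} (ho : o ≠ 0) : Bset G A (o + 1) = BsetSucc G (Bset G A o) := by
  rw [Bset, Ordinal.limitRecOn_add_one, if_neg ho]; rfl

lemma Bset_limit {o : Ordinal.{0}} (ho : Order.IsSuccLimit o) :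
    Bset G A o = fun σ x => ⋂ β, ⋂ (_ : β < o), ⋂ (_ : 1 ≤ β), Bset G A β σ x := by
  rw [Bset, Ordinal.limitRecOn_limit _ _ _ _ ho]; rfl

theorem Bset_induction (P : (Set (ℕ × ℕ) → X → Set X) → Prop) (one : P (BsetOne G A))
    (succ : ∀ F, P F → P (BsetSucc G F))
    (inter : ∀ S : Set (Set (ℕ × ℕ) → X → Set X), (∀ F ∈ S, P F) → P fun σ x => ⋂ F ∈ S, F σ x)
    {α : Ordinal.{0}} (hα : 1 ≤ α) : P (Bset G A α) := by
  induction α using Ordinal.limitRecOn with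
  | zero => exact absurd hα (by simp)
  | add_one o ih =>
    rcases eq_or_ne o 0 with rfl | ho
    · rwa [zero_add, Bset_one]
    · rw [Bset_add_one ho]
      exact succ _ (ih (Order.one_le_iff_ne_zero.2 ho))
  | limit o ho ih =>
    have h := inter (Bset G A '' {β | β < o ∧ 1 ≤ β}) (by
      rintro _ ⟨β, ⟨hβo, hβ⟩, rfl⟩
      exact ih β hβo hβ)
    convert h using 1
    simp only [Bset_limit ho, biInter_image, mem_ofPred_eq, iInter_and]

end AlphaSets

section AlphaSetProperties

variable {G : Subgroup Sinf} {X : Type*} [TopologicalSpace X] [MulAction G X]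
  {A : ℕ → Set X} (hA : TopologicalSpace.IsTopologicalBasis (range A)) {α : Ordinal.{0}}
include hA

theorem setOrb_subset_Bset (hα : 1 ≤ α) (σ : Set (ℕ × ℕ)) (x : X) :
    setOrb G (Vb G σ) x ⊆ Bset G A α σ x :=
  Bset_induction (fun F => ∀ σ, setOrb G (Vb G σ) x ⊆ F σ x)
    (fun σ => setOrb_subset_BsetOne hA σ x) (fun _ => setOrb_subset_BsetSucc)
    (fun _ hS σ => subset_iInter₂ fun F hF => hS F hF σ) hα σ

variable [ContinuousConstSMul G X]

theorem Bset_anti (hα : 1 ≤ α) {σ δ : Set (ℕ × ℕ)} (hδ : δ ∈ SGfin G) (hσδ : σ ⊆ δ) (x : X) :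
    Bset G A α δ x ⊆ Bset G A α σ x :=
  Bset_induction (fun F => ∀ σ δ, δ ∈ SGfin G → σ ⊆ δ → F δ x ⊆ F σ x)
    (fun _ _ hδ hσδ => BsetOne_anti hA hδ hσδ x) (fun _ hF _ _ => BsetSucc_anti hF)
    (fun _ hS σ δ hδ hσδ => iInter₂_mono fun F hF => hS F hF σ δ hδ hσδ) hα σ δ hδ hσδ

theorem Bset_antitone {σ : Set (ℕ × ℕ)} (hσ : σ ∈ SGfin G) (x : X) {β : Ordinal.{0}}
    (hβ : 1 ≤ β) (hβα : β ≤ α) : Bset G A α σ x ⊆ Bset G A β σ x := by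
  induction α using Ordinal.limitRecOn with
  | zero => exact absurd (hβ.trans hβα) (by simp)
  | add_one o ih =>
    rcases hβα.eq_or_lt with rfl | hβo
    · rfl
    have hβo : β ≤ o := Order.lt_add_one_iff.1 hβo
    have ho : 1 ≤ o := hβ.trans hβo
    rw [Bset_add_one (Order.one_le_iff_ne_zero.1 ho)]
    exact (BsetSucc_subset (fun _ _ hδ hσδ => Bset_anti hA ho hδ hσδ x) hσ).trans (ih hβo)
  | limit o ho _ =>
    rcases hβα.eq_or_lt with rfl | hβo
    · rfl
    rw [Bset_limit ho]
    exact iInter₂_subset_of_subset β hβo (iInter_subset _ hβ)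

theorem Bset_compL_subset (hα : 1 ≤ α) (u : G) (σ : Set (ℕ × ℕ)) (x : X) :
    Bset G A α (compL u σ) x ⊆ u • Bset G A α σ x :=
  Bset_induction (fun F => ∀ (u : G) σ, F (compL u σ) x ⊆ u • F σ x)
    (fun u σ => (BsetOne_compL hA u σ x).subset) (fun _ => BsetSucc_compL_subset)
    (fun _ hS u σ => subset_smul_set_iff.2 <| (smul_set_iInter₂_subset _ _).trans <|
      iInter₂_mono fun F hF => subset_smul_set_iff.1 (hS F hF u σ)) hα u σ

theorem Bset_compL (hα : 1 ≤ α) (u : G) (σ : Set (ℕ × ℕ)) (x : X) :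
    Bset G A α (compL u σ) x = u • Bset G A α σ x := by
  refine (Bset_compL_subset hA hα u σ x).antisymm (smul_set_subset_iff_subset_inv_smul_set.2 ?_)
  simpa only [Subgroup.coe_inv, compL_inv_compL] using Bset_compL_subset hA hα u⁻¹ (compL u σ) x

end AlphaSetProperties

theorem alphaSet_monotone_and_invariant_general
    (G : Subgroup Sinf)
    {X : Type*} [TopologicalSpace X] [MulAction G X] [ContinuousSMul G X]
    (A : ℕ → Set X) (hbasis : TopologicalSpace.IsTopologicalBasis (Set.range A))
    (x : X) (σ : Set (ℕ × ℕ)) (hσ : σ ∈ SGfin G)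
    (α β : Ordinal.{0}) (hα : 1 ≤ α)
    (hβ : 1 ≤ β) :
    (β ≤ α → Bset G A α σ x ⊆ Bset G A β σ x) ∧
    (setOrb G (Vb G σ) x ⊆ Bset G A α σ x ∧
      ∀ g ∈ Vc G (prng σ), g • Bset G A α σ x = Bset G A α σ x) ∧
    (∀ δ ∈ SGfin G, σ ⊆ δ → Bset G A α δ x ⊆ Bset G A α σ x) := by
  refine ⟨Bset_antitone hbasis hσ x hβ, ⟨setOrb_subset_Bset hbasis hα σ x, fun g hg => ?_⟩,
    fun δ hδ hσδ => Bset_anti hbasis hα hδ hσδ x⟩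
  rw [← Bset_compL hbasis hα, compL_eq_self hg]

/-- Monotonicity and invariance of α-sets. -/
theorem alphaSet_monotone_and_invariant
    (G : Subgroup Sinf) (hGclosed : IsClosed (G : Set Sinf))
    {X : Type*} [TopologicalSpace X] [PolishSpace X] [MulAction G X] [ContinuousSMul G X]
    (A : ℕ → Set X) (hbasis : TopologicalSpace.IsTopologicalBasis (Set.range A))
    (hbasisInv : ∀ l, ∃ c : Finset ℕ, ∀ g ∈ Vc G (↑c : Set ℕ), g • A l = A l)
    (x : X) (σ : Set (ℕ × ℕ)) (hσ : σ ∈ SGfin G)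
    (α β : Ordinal.{0}) (hα : 1 ≤ α) (hαc : α.card ≤ Cardinal.aleph0)
    (hβ : 1 ≤ β) (hβc : β.card ≤ Cardinal.aleph0) :
    (β ≤ α → Bset G A α σ x ⊆ Bset G A β σ x) ∧
    (setOrb G (Vb G σ) x ⊆ Bset G A α σ x ∧
      ∀ g ∈ Vc G (prng σ), g • Bset G A α σ x = Bset G A α σ x) ∧
    (∀ δ ∈ SGfin G, σ ⊆ δ → Bset G A α δ x ⊆ Bset G A α σ x) :=
  alphaSet_monotone_and_invariant_general G A hbasis x σ hσ α β hα hβ
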